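/- arXiv:2009.09418 — 4 statements merged into one kernel-verified Lean document; each statement's English description precedes it below -/
import Mathlib

section
/- Let ζ₁ be a positive random variable with P(ζ₁ > y) ∼ c e^{−γy} as y → ∞ for constants c > 0 and γ > 0, whose law puts no mass at zero, let λ > 0, and let X̃₁ be a random variable such that conditional on ζ₁, X̃₁ is geometric on {1,2,…} with parameter e^{−λζ₁}, i.e. P(X̃₁ > k) = E[(1 − e^{−λζ₁})^k] for all k ∈ ℕ. Set a = γ/λ. Then P(X̃₁ > k) ∼ c Γ(1+a) k^{−a} as k → ∞ (where ∼ means the ratio of the two sides tends to 1). -/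
open MeasureTheory Filter Set Real Topology

/-!
Write `U = e^{-λζ₁}` and `G t = P(U < t)`; the tail hypothesis says `G t ∼ c t^a` as `t → 0+`.
Since `(1 - U)^k = ∫_{kU}^{k} (1 - s/k)^{k-1} ds`, Fubini gives
`E (1 - U)^k = ∫_0^k (1 - s/k)^{k-1} G(s/k) ds`. After multiplying by `k^a` the integrand tends
to `c s^a e^{-s}` and is dominated by a multiple of `s^a e^{-s}`, so dominated convergence yields
`k^a E (1 - U)^k → c ∫_0^∞ s^a e^{-s} ds = c Γ(1 + a)`.
-/

lemma one_sub_div_pow_pred_le_exp {n : ℕ} {s : ℝ} (hs : 0 ≤ s) (hsn : s ≤ n) :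
    (1 - s / n) ^ (n - 1) ≤ exp 1 * exp (-s) := by
  rcases Nat.eq_zero_or_pos n with rfl | hn
  · obtain rfl : s = 0 := le_antisymm (by simpa using hsn) hs
    simp
  have hn' : (0 : ℝ) < n := by exact_mod_cast hn
  calc (1 - s / n) ^ (n - 1) ≤ exp (-(s / n)) ^ (n - 1) :=
        pow_le_pow_left₀ (by rw [sub_nonneg, div_le_one hn']; exact hsn)
          (one_sub_le_exp_neg _) _
    _ = exp (-s) * exp (s / n) := by
        rw [← exp_nat_mul, ← exp_add, Nat.cast_pred hn]; congr 1; field_simp; ring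
    _ ≤ exp 1 * exp (-s) := by
        rw [mul_comm]; gcongr; rwa [div_le_one hn']

lemma tendsto_one_sub_div_pow_pred (s : ℝ) :
    Tendsto (fun n : ℕ => (1 - s / n) ^ (n - 1)) atTop (𝓝 (exp (-s))) := by
  have hbase : Tendsto (fun n : ℕ => 1 - s / n) atTop (𝓝 1) := by
    simpa using (tendsto_const_div_atTop_nhds_zero_nat s).const_sub 1
  have h := (tendsto_one_add_div_pow_exp (-s)).mul (hbase.inv₀ one_ne_zero)
  rw [inv_one, mul_one] at h
  refine h.congr' ?_
  filter_upwards [tendsto_natCast_atTop_atTop.eventually_gt_atTop s,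
    eventually_ne_atTop 0] with n hsn hn
  have hne : 1 - s / n ≠ 0 := (sub_pos.2 ((div_lt_one (by positivity)).2 hsn)).ne'
  obtain ⟨m, rfl⟩ := Nat.exists_eq_succ_of_ne_zero hn
  rw [Nat.succ_sub_one, neg_div, ← sub_eq_add_neg, pow_succ, mul_inv_cancel_right₀ hne]

lemma integral_Ioc_one_sub_div_pow_pred {n : ℕ} (hn : n ≠ 0) {u : ℝ} (hu : u ≤ 1) :
    ∫ s in Ioc (n * u) n, (1 - s / n) ^ (n - 1) = (1 - u) ^ n := by
  have hn' : (n : ℝ) ≠ 0 := by exact_mod_cast hn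
  have hderiv (s : ℝ) :
      HasDerivAt (fun s : ℝ => -(1 - s / n) ^ n) ((1 - s / n) ^ (n - 1)) s := by
    refine ((((hasDerivAt_id' s).div_const (n : ℝ)).const_sub 1).fun_pow n).fun_neg.congr_deriv ?_
    field_simp
  rw [← intervalIntegral.integral_of_le (by nlinarith [show (0 : ℝ) ≤ n from n.cast_nonneg]),
    intervalIntegral.integral_eq_sub_of_hasDerivAt (fun s _ => hderiv s)
      ((by fun_prop : Continuous _).intervalIntegrable _ _)]
  simp [hn', zero_pow hn]

theorem integral_one_sub_pow_eq_integral_Ioc {α : Type*} [MeasurableSpace α] (μ : Measure α)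
    [IsFiniteMeasure μ] {u : α → ℝ} (hu : Measurable u) (hu01 : ∀ᵐ x ∂μ, u x ∈ Icc 0 1)
    {n : ℕ} (hn : n ≠ 0) :
    ∫ x, (1 - u x) ^ n ∂μ =
      ∫ s in Ioc 0 (n : ℝ), (1 - s / n) ^ (n - 1) * μ.real {x | u x < s / n} := by
  have hn' : (0 : ℝ) < n := by positivity
  set f : α → ℝ → ℝ := fun x s => if u x < s / n then (1 - s / n) ^ (n - 1) else 0 with hf
  have hint : Integrable (Function.uncurry f) (μ.prod (volume.restrict (Ioc 0 (n : ℝ)))) := by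
    refine Integrable.of_bound ?_ 1 ?_
    · refine (Measurable.ite ?_ (by fun_prop) measurable_const).aestronglyMeasurable
      exact measurableSet_lt (by fun_prop) (by fun_prop)
    · filter_upwards [Measure.quasiMeasurePreserving_snd.ae (ae_restrict_mem measurableSet_Ioc)]
        with ⟨x, s⟩ ⟨hs0, hsn⟩
      have h0 : 0 ≤ 1 - s / n := by rw [sub_nonneg, div_le_one hn']; exact hsn
      have h1 : 1 - s / n ≤ 1 := by have := div_pos hs0 hn'; linarith
      simp only [Function.uncurry_apply_pair, hf]
      split_ifs
      · rw [norm_pow, Real.norm_of_nonneg h0]; exact pow_le_one₀ h0 h1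
      · simp
  have hinner_s : ∀ᵐ x ∂μ, ∫ s in Ioc 0 (n : ℝ), f x s = (1 - u x) ^ n := by
    filter_upwards [hu01] with x ⟨hu0, hu1⟩
    have hset : Ioc 0 (n : ℝ) ∩ {s | u x < s / n} = Ioc (n * u x) n := by
      ext s
      simp only [mem_inter_iff, mem_Ioc, mem_ofPred_eq, lt_div_iff₀ hn', mul_comm (u x)]
      constructor
      · rintro ⟨⟨-, h⟩, h'⟩; exact ⟨h', h⟩
      · rintro ⟨h', h⟩; exact ⟨⟨(by positivity : 0 ≤ (n : ℝ) * u x).trans_lt h', h⟩, h'⟩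
    have hind : ∀ s, f x s = {s | u x < s / n}.indicator (fun s => (1 - s / n) ^ (n - 1)) s :=
      fun s => by simp [hf, indicator_apply]
    simp_rw [hind]
    rw [setIntegral_indicator (measurableSet_lt measurable_const (by fun_prop)), hset,
      integral_Ioc_one_sub_div_pow_pred hn hu1]
  have hinner_x (s : ℝ) (_ : s ∈ Ioc 0 (n : ℝ)) :
      ∫ x, f x s ∂μ = (1 - s / n) ^ (n - 1) * μ.real {x | u x < s / n} := by
    have hind : ∀ x, f x s = {x | u x < s / n}.indicator (fun _ => (1 - s / n) ^ (n - 1)) x :=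
      fun x => by simp [hf, indicator_apply]
    simp_rw [hind]
    rw [integral_indicator_const _ (measurableSet_lt hu measurable_const), smul_eq_mul, mul_comm]
  calc ∫ x, (1 - u x) ^ n ∂μ = ∫ x, (∫ s in Ioc 0 (n : ℝ), f x s) ∂μ :=
        (integral_congr_ae hinner_s).symm
    _ = ∫ s in Ioc 0 (n : ℝ), (∫ x, f x s ∂μ) := integral_integral_swap hint
    _ = _ := setIntegral_congr_fun measurableSet_Ioc hinner_x

lemma exists_abs_le_mul_rpow_of_tendsto {G : ℝ → ℝ} {a B L : ℝ} (ha : 0 ≤ a)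
    (hB : ∀ t, |G t| ≤ B) (hG : Tendsto (fun t => G t / t ^ a) (𝓝[>] 0) (𝓝 L)) :
    ∃ M, ∀ t, 0 < t → |G t| ≤ M * t ^ a := by
  obtain ⟨δ, hδ, hnear⟩ : ∃ δ > 0, ∀ t ∈ Ioo 0 δ, |G t / t ^ a| ≤ |L| + 1 := by
    have := hG.abs.eventually (eventually_le_nhds (lt_add_one |L|))
    exact (mem_nhdsGT_iff_exists_Ioo_subset.1 this).imp fun δ h => ⟨h.1, fun t ht => h.2 ht⟩
  refine ⟨max (|L| + 1) (B / δ ^ a), fun t ht => ?_⟩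
  have hta : 0 < t ^ a := rpow_pos_of_pos ht a
  rcases lt_or_ge t δ with htδ | hδt
  · calc |G t| = |G t / t ^ a| * t ^ a := by
          rw [abs_div, abs_of_pos hta, div_mul_cancel₀ _ hta.ne']
      _ ≤ max (|L| + 1) (B / δ ^ a) * t ^ a := by
          gcongr; exact (hnear t ⟨ht, htδ⟩).trans (le_max_left _ _)
  · have hB0 : 0 ≤ B := (abs_nonneg _).trans (hB 0)
    calc |G t| ≤ B / δ ^ a * δ ^ a := by
          rw [div_mul_cancel₀ _ (rpow_pos_of_pos hδ a).ne']; exact hB t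
      _ ≤ max (|L| + 1) (B / δ ^ a) * t ^ a := by gcongr; exact le_max_right _ _

lemma abs_rpow_mul_one_sub_div_pow_pred_mul_le {G : ℝ → ℝ} {a M : ℝ}
    (hM : ∀ t, 0 < t → |G t| ≤ M * t ^ a) {k : ℕ} {s : ℝ} (hs : 0 < s) (hsk : s ≤ k) :
    |(k : ℝ) ^ a * ((1 - s / k) ^ (k - 1) * G (s / k))| ≤ M * exp 1 * (exp (-s) * s ^ a) := by
  have hk : (0 : ℝ) < k := hs.trans_le hsk
  have hpow : 0 ≤ (1 - s / k) ^ (k - 1) :=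
    pow_nonneg (by rw [sub_nonneg, div_le_one hk]; exact hsk) _
  have hGs : (k : ℝ) ^ a * |G (s / k)| ≤ M * s ^ a :=
    calc (k : ℝ) ^ a * |G (s / k)| ≤ (k : ℝ) ^ a * (M * (s / k) ^ a) := by
          gcongr; exact hM _ (by positivity)
      _ = M * s ^ a := by rw [div_rpow hs.le hk.le]; field_simp
  calc |(k : ℝ) ^ a * ((1 - s / k) ^ (k - 1) * G (s / k))|
      = (1 - s / k) ^ (k - 1) * ((k : ℝ) ^ a * |G (s / k)|) := by
        rw [abs_mul, abs_mul, abs_of_pos (by positivity), abs_of_nonneg hpow]; ring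
    _ ≤ (exp 1 * exp (-s)) * (M * s ^ a) :=
        mul_le_mul (one_sub_div_pow_pred_le_exp hs.le hsk) hGs (by positivity) (by positivity)
    _ = M * exp 1 * (exp (-s) * s ^ a) := by ring

lemma tendsto_rpow_mul_one_sub_div_pow_pred_mul {G : ℝ → ℝ} {a L : ℝ}
    (hG : Tendsto (fun t => G t / t ^ a) (𝓝[>] 0) (𝓝 L)) {s : ℝ} (hs : 0 < s) :
    Tendsto (fun k : ℕ => (k : ℝ) ^ a * ((1 - s / k) ^ (k - 1) * G (s / k))) atTop
      (𝓝 (L * (exp (-s) * s ^ a))) := by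
  have hscaled : Tendsto (fun k : ℕ => s / k) atTop (𝓝[>] 0) :=
    tendsto_nhdsWithin_iff.2 ⟨tendsto_const_div_atTop_nhds_zero_nat s,
      eventually_gt_atTop 0 |>.mono fun k hk => div_pos hs (by exact_mod_cast hk)⟩
  have hlim := ((hG.comp hscaled).mul_const (s ^ a)).mul (tendsto_one_sub_div_pow_pred s)
  rw [show L * (exp (-s) * s ^ a) = L * s ^ a * exp (-s) by ring]
  refine hlim.congr' ?_
  filter_upwards [eventually_gt_atTop 0] with k hk
  have hk' : (0 : ℝ) < k := by exact_mod_cast hk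
  rw [Function.comp_apply, div_rpow hs.le hk'.le]
  field_simp

theorem tendsto_rpow_mul_integral_Ioc_one_sub_div_pow_pred {G : ℝ → ℝ} {a B L : ℝ}
    (ha : 0 ≤ a) (hGm : Measurable G) (hB : ∀ t, |G t| ≤ B)
    (hG : Tendsto (fun t => G t / t ^ a) (𝓝[>] 0) (𝓝 L)) :
    Tendsto (fun k : ℕ => (k : ℝ) ^ a * ∫ s in Ioc 0 (k : ℝ), (1 - s / k) ^ (k - 1) * G (s / k))
      atTop (𝓝 (L * Gamma (1 + a))) := by
  obtain ⟨M, hM⟩ := exists_abs_le_mul_rpow_of_tendsto ha hB hG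
  have hM0 : 0 ≤ M := by simpa using (abs_nonneg _).trans (hM 1 one_pos)
  let F : ℕ → ℝ → ℝ := fun k => (Iic (k : ℝ)).indicator
    fun s => (k : ℝ) ^ a * ((1 - s / k) ^ (k - 1) * G (s / k))
  have hF_int (k : ℕ) : (k : ℝ) ^ a * ∫ s in Ioc 0 (k : ℝ), (1 - s / k) ^ (k - 1) * G (s / k)
      = ∫ s in Ioi 0, F k s := by
    rw [setIntegral_indicator measurableSet_Iic, Ioi_inter_Iic, integral_const_mul]
  have hF_meas (k : ℕ) : AEStronglyMeasurable (F k) (volume.restrict (Ioi 0)) :=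
    ((by fun_prop : Measurable _).indicator measurableSet_Iic).aestronglyMeasurable
  have hF_bound (k : ℕ) : ∀ᵐ s ∂(volume.restrict (Ioi (0 : ℝ))),
      ‖F k s‖ ≤ M * exp 1 * (exp (-s) * s ^ a) := by
    filter_upwards [ae_restrict_mem measurableSet_Ioi] with s (hs : 0 < s)
    dsimp only [F]
    by_cases hsk : s ≤ k
    · rw [indicator_of_mem (show s ∈ Iic (k : ℝ) from hsk), Real.norm_eq_abs]
      exact abs_rpow_mul_one_sub_div_pow_pred_mul_le hM hs hsk
    · rw [indicator_of_notMem (show s ∉ Iic (k : ℝ) from hsk), norm_zero]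
      positivity
  have hF_lim : ∀ᵐ s ∂(volume.restrict (Ioi (0 : ℝ))),
      Tendsto (fun k => F k s) atTop (𝓝 (L * (exp (-s) * s ^ a))) := by
    filter_upwards [ae_restrict_mem measurableSet_Ioi] with s (hs : 0 < s)
    refine (tendsto_rpow_mul_one_sub_div_pow_pred_mul hG hs).congr' ?_
    filter_upwards [tendsto_natCast_atTop_atTop.eventually_ge_atTop s] with k hsk
    dsimp only [F]
    rw [indicator_of_mem (show s ∈ Iic (k : ℝ) from hsk)]
  have hGamma : ∫ s in Ioi (0 : ℝ), L * (exp (-s) * s ^ a) = L * Gamma (1 + a) := by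
    rw [integral_const_mul, Gamma_eq_integral (by linarith), add_sub_cancel_left]
  have hdom : Integrable (fun s => M * exp 1 * (exp (-s) * s ^ a)) (volume.restrict (Ioi 0)) :=
    ((GammaIntegral_convergent (by linarith : 0 < 1 + a)).congr_fun
      (fun s _ => by rw [add_sub_cancel_left]) measurableSet_Ioi).const_mul _
  simp_rw [hF_int, ← hGamma]
  exact tendsto_integral_of_dominated_convergence _ hF_meas hdom hF_bound hF_lim

theorem tendsto_rpow_mul_integral_one_sub_pow {α : Type*} [MeasurableSpace α] (μ : Measure α)
    [IsFiniteMeasure μ] {u : α → ℝ} (hu : Measurable u) (hu01 : ∀ᵐ x ∂μ, u x ∈ Icc 0 1)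
    {a L : ℝ} (ha : 0 ≤ a)
    (htail : Tendsto (fun t => μ.real {x | u x < t} / t ^ a) (𝓝[>] 0) (𝓝 L)) :
    Tendsto (fun k : ℕ => (k : ℝ) ^ a * ∫ x, (1 - u x) ^ k ∂μ) atTop (𝓝 (L * Gamma (1 + a))) := by
  have hmono : Monotone fun t => μ.real {x | u x < t} :=
    fun s t hst => measureReal_mono fun x (hx : u x < s) => hx.trans_le hst
  have hbound : ∀ t, |μ.real {x | u x < t}| ≤ μ.real univ := fun t => by
    rw [abs_of_nonneg measureReal_nonneg]; exact measureReal_mono (subset_univ _)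
  refine (tendsto_rpow_mul_integral_Ioc_one_sub_div_pow_pred ha hmono.measurable hbound
    htail).congr' ?_
  filter_upwards [eventually_ne_atTop 0] with k hk
  rw [integral_one_sub_pow_eq_integral_Ioc μ hu hu01 hk]

lemma tendsto_measureReal_exp_lt_div_rpow (ν : Measure ℝ) {c γ lam : ℝ} (hc : c ≠ 0)
    (hlam : 0 < lam)
    (htail : Tendsto (fun y => ν.real {x | y < x} / (c * exp (-γ * y))) atTop (𝓝 1)) :
    Tendsto (fun t => ν.real {x | exp (-lam * x) < t} / t ^ (γ / lam)) (𝓝[>] 0) (𝓝 c) := by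
  have hlog : Tendsto (fun t => -log t / lam) (𝓝[>] 0) atTop :=
    (tendsto_neg_atBot_atTop.comp tendsto_log_nhdsGT_zero).atTop_div_const hlam
  have h := (htail.comp hlog).mul_const c
  rw [one_mul] at h
  refine h.congr' ?_
  filter_upwards [self_mem_nhdsWithin] with t (ht : 0 < t)
  have hset : {x | exp (-lam * x) < t} = {x | -log t / lam < x} := by
    ext x
    rw [mem_ofPred_eq, mem_ofPred_eq, ← lt_log_iff_exp_lt ht, div_lt_iff₀ hlam]
    constructor <;> intro <;> linarith
  have hexp : exp (-γ * (-log t / lam)) = t ^ (γ / lam) := by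
    rw [rpow_def_of_pos ht]; congr 1; field_simp
  simp only [Function.comp_apply, hset, hexp]
  field_simp

/-- Let `ζ₁` have law `ν` on `(0,∞)` (no mass at zero) with
`P(ζ₁ > y) ∼ c e^{−γy}` as `y → ∞`, let `λ > 0` and `a = γ/λ`.  If `X̃₁` is, conditionally on
`ζ₁`, geometric on `{1,2,…}` with parameter `e^{−λζ₁}`, i.e. `P(X̃₁ > k) = E[(1−e^{−λζ₁})^k]`,
then `P(X̃₁ > k) ∼ c Γ(1+a) k^{−a}` as `k → ∞`. -/
theorem stmt_13
    (ν : Measure ℝ) [IsProbabilityMeasure ν] (c γ lam : ℝ)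
    (hc : 0 < c) (hγ : 0 < γ) (hlam : 0 < lam)
    (hpos : ν (Set.Iic 0) = 0)
    (htail : Tendsto (fun y : ℝ => (ν {x | y < x}).toReal / (c * Real.exp (-γ * y)))
      atTop (nhds 1)) :
    Tendsto (fun k : ℕ =>
        (∫ x, (1 - Real.exp (-lam * x)) ^ k ∂ν) /
          (c * Real.Gamma (1 + γ / lam) * (k : ℝ) ^ (-(γ / lam))))
      atTop (nhds 1) := by
  have hu01 : ∀ᵐ x ∂ν, exp (-lam * x) ∈ Icc 0 1 := by
    filter_upwards [measure_eq_zero_iff_ae_notMem.1 hpos] with x (hx : ¬x ≤ 0)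
    exact ⟨(exp_pos _).le, exp_le_one_iff.2 (by nlinarith)⟩
  have hlim := tendsto_rpow_mul_integral_one_sub_pow ν (by fun_prop) hu01
    (div_nonneg hγ.le hlam.le) (tendsto_measureReal_exp_lt_div_rpow ν hc.ne' hlam htail)
  have hcΓ : c * Gamma (1 + γ / lam) ≠ 0 := (mul_pos hc (Gamma_pos_of_pos (by positivity))).ne'
  have hratio := hlim.div_const (c * Gamma (1 + γ / lam))
  rw [div_self hcΓ] at hratio
  refine hratio.congr fun k => ?_
  rw [rpow_neg (Nat.cast_nonneg k)]
  field_simp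
end

section
/- Consider a Pólya urn that initially contains M ≥ 1 balls, all of different colors: at each step a ball is drawn uniformly at random from the urn and returned together with one additional ball of the same color, and this is repeated until the urn contains N ≥ M balls. If two distinct balls are then chosen uniformly at random from the urn, the probability that they have the same color is at most 2/(M+1). Equivalently: let (n₁(t), …, n_M(t)) be the Markov chain started from (1, …, 1) in which at each step coordinate i is increased by 1 with probability n_i(t)/(n₁(t)+⋯+n_M(t)); after N − M steps, E[ Σ_{i=1}^M n_i (n_i − 1) ] / (N(N−1)) ≤ 2/(M+1). -/
/-!
Let `S v = ∑ᵢ vᵢ (vᵢ - 1)` count the ordered pairs of distinct balls of equal color and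
`F t = E[S (n t)]`. Adding a ball of color `i` raises `S` by `2 vᵢ`, and this happens with
probability `vᵢ / (M + t)`; since `∑ᵢ vᵢ² = S v + M + t`, this gives the recurrence
`(M + t) F (t + 1) = (M + t + 2) F t + 2 (M + t)` with `F 0 = 0`, solved by
`(M + 1) F t = 2 (M + t) t`. At `t = N - M` the probability of a same-color pair is therefore
`2 (N - M) / ((M + 1) (N - 1)) ≤ 2 / (M + 1)`.
-/

open MeasureTheory

section FiniteRange

variable {Ω α : Type*} [MeasurableSpace Ω] {μ : Measure Ω} {X : Ω → α} {V : Finset α}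

theorem comp_ae_eq_sum_indicator {E : Type*} [AddCommMonoid E] (hV : ∀ᵐ ω ∂μ, X ω ∈ V)
    (g : α → E) :
    (fun ω => g (X ω)) =ᵐ[μ] fun ω => ∑ v ∈ V, {ω | X ω = v}.indicator (fun _ => g v) ω := by
  classical
  filter_upwards [hV] with ω hω
  simp [Set.indicator_apply, hω]

variable [MeasurableSpace α] [MeasurableSingletonClass α] [IsFiniteMeasure μ]
  {E : Type*} [NormedAddCommGroup E]

theorem integrable_indicator_level_set (hX : Measurable X) (c : E) (v : α) :
    Integrable ({ω | X ω = v}.indicator fun _ => c) μ :=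
  (integrable_const c).indicator (hX (measurableSet_singleton v))

theorem integrable_comp_of_ae_mem (hX : Measurable X) (hV : ∀ᵐ ω ∂μ, X ω ∈ V) (g : α → E) :
    Integrable (fun ω => g (X ω)) μ :=
  (integrable_finsetSum V fun v _ => integrable_indicator_level_set hX (g v) v).congr
    (comp_ae_eq_sum_indicator hV g).symm

theorem integral_comp_eq_sum_of_ae_mem [NormedSpace ℝ E] [CompleteSpace E] (hX : Measurable X)
    (hV : ∀ᵐ ω ∂μ, X ω ∈ V) (g : α → E) :
    ∫ ω, g (X ω) ∂μ = ∑ v ∈ V, μ.real {ω | X ω = v} • g v := by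
  rw [integral_congr_ae (comp_ae_eq_sum_indicator hV g),
    integral_finsetSum V fun v _ => integrable_indicator_level_set hX (g v) v]
  exact Finset.sum_congr rfl fun v _ => integral_indicator_const _ (hX (measurableSet_singleton v))

end FiniteRange

section PolyaUrn

variable {ι : Type*} [DecidableEq ι]

def addBall (v : ι → ℕ) (i : ι) : ι → ℕ := Function.update v i (v i + 1)

theorem addBall_eq_add_single (v : ι → ℕ) (i : ι) : addBall v i = v + Pi.single i 1 := by
  ext j
  rcases eq_or_ne j i with rfl | hj
  · simp [addBall]
  · simp [addBall, hj]

theorem addBall_injective (v : ι → ℕ) : Function.Injective (addBall v) := by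
  intro i j h
  by_contra hij
  simpa [addBall, hij] using congrFun h i

variable [Fintype ι]

theorem sum_addBall (v : ι → ℕ) (i : ι) : ∑ j, addBall v i j = ∑ j, v j + 1 := by
  simp [addBall_eq_add_single, Finset.sum_add_distrib]

theorem sum_eq_sum_zero_add_of_addBall {v : ℕ → ι → ℕ} (h : ∀ t, ∃ i, v (t + 1) = addBall (v t) i)
    (t : ℕ) : ∑ j, v t j = ∑ j, v 0 j + t := by
  induction t with
  | zero => rfl
  | succ t ih =>
    obtain ⟨i, hi⟩ := h t
    rw [hi, sum_addBall, ih, add_assoc]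

def sameColorPairs (v : ι → ℕ) : ℝ := ∑ i, (v i : ℝ) * ((v i : ℝ) - 1)

theorem sameColorPairs_addBall (v : ι → ℕ) (i : ι) :
    sameColorPairs (addBall v i) = sameColorPairs v + 2 * v i := by
  rw [sameColorPairs, sameColorPairs, ← sub_eq_iff_eq_add', ← Finset.sum_sub_distrib,
    Finset.sum_eq_single i (fun j _ hj => by simp [addBall, hj]) (by simp)]
  simp only [addBall, Function.update_self]
  push_cast
  ring

theorem sum_mul_sameColorPairs_addBall (v : ι → ℕ) :
    ∑ i, (v i : ℝ) * sameColorPairs (addBall v i) =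
      (∑ i, (v i : ℝ) + 2) * sameColorPairs v + 2 * ∑ i, (v i : ℝ) := by
  have hsq : ∑ i, (v i : ℝ) ^ 2 = sameColorPairs v + ∑ i, (v i : ℝ) := by
    rw [sameColorPairs, ← Finset.sum_add_distrib]
    exact Finset.sum_congr rfl fun i _ => by ring
  calc ∑ i, (v i : ℝ) * sameColorPairs (addBall v i)
      = ∑ i, ((v i : ℝ) * sameColorPairs v + 2 * (v i : ℝ) ^ 2) :=
        Finset.sum_congr rfl fun i _ => by rw [sameColorPairs_addBall]; ring
    _ = (∑ i, (v i : ℝ)) * sameColorPairs v + 2 * ∑ i, (v i : ℝ) ^ 2 := by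
        rw [Finset.sum_add_distrib, Finset.sum_mul, Finset.mul_sum]
    _ = (∑ i, (v i : ℝ) + 2) * sameColorPairs v + 2 * ∑ i, (v i : ℝ) := by
        rw [hsq]; ring

end PolyaUrn

section PolyaStep

variable {Ω ι : Type*} [MeasurableSpace Ω] [Fintype ι] [DecidableEq ι] {μ : Measure Ω}
  {X Y : Ω → ι → ℕ}

theorem measureReal_addBall_mul_sum
    (htrans : ∀ (v : ι → ℕ) (i : ι), μ {ω | X ω = v ∧ Y ω = addBall v i} *
      ((∑ j, v j : ℕ) : ENNReal) = μ {ω | X ω = v} * ((v i : ℕ) : ENNReal))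
    (v : ι → ℕ) (i : ι) :
    μ.real {ω | X ω = v ∧ Y ω = addBall v i} * (∑ j, v j : ℕ) = μ.real {ω | X ω = v} * v i := by
  have h := congrArg ENNReal.toReal (htrans v i)
  rwa [ENNReal.toReal_mul, ENNReal.toReal_mul, ENNReal.toReal_natCast,
    ENNReal.toReal_natCast] at h

theorem ae_mem_piAntidiag {m : ℕ} (hm : ∀ᵐ ω ∂μ, ∑ i, X ω i = m) :
    ∀ᵐ ω ∂μ, X ω ∈ (Finset.univ : Finset ι).piAntidiag m := by
  filter_upwards [hm] with ω hω
  simpa using hω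

variable [IsFiniteMeasure μ]

theorem natCast_mul_integral_addBall_step (hX : Measurable X) (hY : Measurable Y)
    (hstep : ∀ᵐ ω ∂μ, ∃ i, Y ω = addBall (X ω) i)
    (htrans : ∀ (v : ι → ℕ) (i : ι), μ {ω | X ω = v ∧ Y ω = addBall v i} *
      ((∑ j, v j : ℕ) : ENNReal) = μ {ω | X ω = v} * ((v i : ℕ) : ENNReal))
    {m : ℕ} (hm : ∀ᵐ ω ∂μ, ∑ i, X ω i = m) (g : (ι → ℕ) → (ι → ℕ) → ℝ) :
    m * ∫ ω, g (X ω) (Y ω) ∂μ = ∫ ω, ∑ i, (X ω i : ℝ) * g (X ω) (addBall (X ω) i) ∂μ := by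
  set V := (Finset.univ : Finset ι).piAntidiag m
  let step : (ι → ℕ) × ι → (ι → ℕ) × (ι → ℕ) := fun p => (p.1, addBall p.1 p.2)
  have hstep_inj : step.Injective := by
    rintro ⟨v, i⟩ ⟨w, j⟩ h
    obtain ⟨rfl, h⟩ := Prod.mk.inj h
    exact congrArg _ (addBall_injective v h)
  have hXV : ∀ᵐ ω ∂μ, X ω ∈ V := ae_mem_piAntidiag hm
  have hXYV : ∀ᵐ ω ∂μ, (X ω, Y ω) ∈ (V ×ˢ Finset.univ).image step := by
    filter_upwards [hXV, hstep] with ω hω ⟨i, hi⟩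
    exact Finset.mem_image.mpr ⟨(X ω, i), by simp [hω], by simp [step, hi]⟩
  rw [integral_comp_eq_sum_of_ae_mem (hX.prodMk hY) hXYV (fun p => g p.1 p.2),
    integral_comp_eq_sum_of_ae_mem hX hXV fun v => ∑ i, (v i : ℝ) * g v (addBall v i),
    Finset.sum_image fun p _ q _ h => hstep_inj h, Finset.sum_product, Finset.mul_sum]
  refine Finset.sum_congr rfl fun v hv => ?_
  have hvm : ∑ j, v j = m := by simpa [V] using hv
  rw [Finset.mul_sum, smul_eq_mul, Finset.mul_sum]
  refine Finset.sum_congr rfl fun i _ => ?_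
  have hset : {ω | (X ω, Y ω) = step (v, i)} = {ω | X ω = v ∧ Y ω = addBall v i} := by
    simp [step]
  rw [smul_eq_mul, hset, ← mul_assoc, mul_comm (m : ℝ), ← hvm,
    measureReal_addBall_mul_sum htrans, mul_assoc]

theorem natCast_mul_integral_sameColorPairs_step [IsProbabilityMeasure μ] (hX : Measurable X)
    (hY : Measurable Y) (hstep : ∀ᵐ ω ∂μ, ∃ i, Y ω = addBall (X ω) i)
    (htrans : ∀ (v : ι → ℕ) (i : ι), μ {ω | X ω = v ∧ Y ω = addBall v i} *
      ((∑ j, v j : ℕ) : ENNReal) = μ {ω | X ω = v} * ((v i : ℕ) : ENNReal))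
    {m : ℕ} (hm : ∀ᵐ ω ∂μ, ∑ i, X ω i = m) :
    m * ∫ ω, sameColorPairs (Y ω) ∂μ = (m + 2) * ∫ ω, sameColorPairs (X ω) ∂μ + 2 * m := by
  have hint := integrable_comp_of_ae_mem hX (ae_mem_piAntidiag hm) sameColorPairs
  calc (m : ℝ) * ∫ ω, sameColorPairs (Y ω) ∂μ
      = ∫ ω, ∑ i, (X ω i : ℝ) * sameColorPairs (addBall (X ω) i) ∂μ :=
        natCast_mul_integral_addBall_step hX hY hstep htrans hm fun _ w => sameColorPairs w
    _ = ∫ ω, ((m + 2) * sameColorPairs (X ω) + 2 * m) ∂μ := by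
        refine integral_congr_ae ?_
        filter_upwards [hm] with ω hω
        have hω' : ∑ i, (X ω i : ℝ) = m := by exact_mod_cast hω
        rw [sum_mul_sameColorPairs_addBall, hω']
    _ = (m + 2) * ∫ ω, sameColorPairs (X ω) ∂μ + 2 * m := by
        rw [integral_add (hint.const_mul _) (integrable_const _), integral_const_mul,
          integral_const, probReal_univ, one_smul]

end PolyaStep

theorem eq_closed_form_of_recurrence {M : ℝ} (hM : 0 < M) {F : ℕ → ℝ} (h0 : F 0 = 0)
    (hrec : ∀ t : ℕ, (M + t) * F (t + 1) = (M + t + 2) * F t + 2 * (M + t)) (t : ℕ) :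
    (M + 1) * F t = 2 * (M + t) * t := by
  induction t with
  | zero => simp [h0]
  | succ t ih =>
    have hMt : M + t ≠ 0 := by positivity
    refine mul_left_cancel₀ hMt ?_
    calc (M + t) * ((M + 1) * F (t + 1)) = (M + 1) * ((M + t + 2) * F t + 2 * (M + t)) := by
          rw [← hrec]; ring
      _ = (M + t + 2) * ((M + 1) * F t) + 2 * (M + t) * (M + 1) := by ring
      _ = (M + t) * (2 * (M + ↑(t + 1)) * ↑(t + 1)) := by rw [ih]; push_cast; ring

theorem div_le_two_div_of_mul_eq {M N F : ℝ} (hM : 1 ≤ M) (hMN : M ≤ N)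
    (hF : (M + 1) * F = 2 * N * (N - M)) : F / (N * (N - 1)) ≤ 2 / (M + 1) := by
  rcases (hM.trans hMN).eq_or_lt with rfl | hN
  -- for `N = 1` the left side is `F / 0 = 0`
  · simpa using div_nonneg zero_le_two (by linarith : 0 ≤ M + 1)
  · rw [div_le_div_iff₀ (by nlinarith) (by linarith)]
    nlinarith

/-- Pólya urn: let `(n₁(t),…,n_M(t))` be the Markov chain started from
`(1,…,1)` in which at each step coordinate `i` is increased by `1` with probability
`n_i(t)/(n₁(t)+⋯+n_M(t))`.  Then after `N − M` steps (so the urn contains `N ≥ M ≥ 1` balls),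
`E[Σ_{i=1}^M n_i(n_i − 1)] / (N(N−1)) ≤ 2/(M+1)`; i.e. the probability that two balls drawn
uniformly at random (without replacement) from the urn share a color is at most `2/(M+1)`. -/
theorem stmt_15
    {Ω : Type*} [MeasurableSpace Ω] (μ : Measure Ω) [IsProbabilityMeasure μ]
    (M N : ℕ) (hM : 1 ≤ M) (hMN : M ≤ N)
    (n : ℕ → Ω → Fin M → ℕ) (hmeas : ∀ t, Measurable (n t))
    (h0 : ∀ᵐ ω ∂μ, n 0 ω = fun _ => 1)
    (hstep : ∀ t ω, ∃ i, n (t + 1) ω = Function.update (n t ω) i (n t ω i + 1))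
    (htrans : ∀ t (v : Fin M → ℕ) (i : Fin M),
      μ {ω | n t ω = v ∧ n (t + 1) ω = Function.update v i (v i + 1)} *
          ((∑ j, v j : ℕ) : ENNReal) =
        μ {ω | n t ω = v} * ((v i : ℕ) : ENNReal)) :
    (∫ ω, ∑ i, (n (N - M) ω i : ℝ) * ((n (N - M) ω i : ℝ) - 1) ∂μ) /
        ((N : ℝ) * ((N : ℝ) - 1)) ≤ 2 / ((M : ℝ) + 1) := by
  have htotal : ∀ t, ∀ᵐ ω ∂μ, ∑ i, n t ω i = M + t := fun t => by
    filter_upwards [h0] with ω hω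
    rw [sum_eq_sum_zero_add_of_addBall (v := fun t => n t ω) (fun t => hstep t ω) t, hω]
    simp
  set F : ℕ → ℝ := fun t => ∫ ω, sameColorPairs (n t ω) ∂μ
  have hF0 : F 0 = 0 := integral_eq_zero_of_ae <| by
    filter_upwards [h0] with ω hω
    simp [sameColorPairs, hω]
  have hrec (t : ℕ) :
      ((M : ℝ) + t) * F (t + 1) = ((M : ℝ) + t + 2) * F t + 2 * ((M : ℝ) + t) := by
    exact_mod_cast natCast_mul_integral_sameColorPairs_step (hmeas t) (hmeas (t + 1))
      (ae_of_all _ (hstep t)) (htrans t) (htotal t)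
  have hclosed := eq_closed_form_of_recurrence (by positivity) hF0 hrec (N - M)
  rw [Nat.cast_sub hMN] at hclosed
  change F (N - M) / _ ≤ _
  exact div_le_two_div_of_mul_eq (by exact_mod_cast hM) (by exact_mod_cast hMN)
    (by linear_combination hclosed)
end

section
/- Suppose η and η̂ are measures on (0,∞) satisfying ∫_0^∞ (1 ∧ κ²) η(dκ) < ∞ and ∫_0^∞ (1 ∧ κ²) η̂(dκ) < ∞, and suppose that for every y ∈ (0,1), ∫_0^∞ (1/κ) (y/(1−y))² exp( − y/(κ(1−y)) ) η(dκ) = ∫_0^∞ (1/κ) (y/(1−y))² exp( − y/(κ(1−y)) ) η̂(dκ). Then η = η̂. -/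
open MeasureTheory Filter

/-!
Writing `y = t / (1 + t)`, the hypothesis says that `∫ κ⁻¹ e^{-t/κ} η(dκ)` is the same for `η` and
`η'` for every `t > 0`. For `t = n + 1` these are the moments of the measure on `[0, 1]` obtained by
pushing `κ⁻¹ e^{-1/κ} η(dκ)` forward along `κ ↦ e^{-1/κ}`; it is finite because
`κ⁻¹ e^{-1/κ} ≤ 6 (1 ∧ κ²)`. By Weierstrass approximation a finite measure on a compact interval is
determined by its moments, and both the injective pushforward and the density, which is positive
on `(0, ∞)`, can be undone.
-/

open Set Polynomial

namespace MeasureTheory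

variable {a b : ℝ} {μ ν : Measure ℝ}

lemma integrable_of_continuous_of_ae_mem_Icc [IsFiniteMeasure μ]
    (hμ : ∀ᵐ x ∂μ, x ∈ Icc a b) {g : ℝ → ℝ} (hg : Continuous g) : Integrable g μ := by
  obtain ⟨C, hC⟩ := isCompact_Icc.exists_bound_of_continuousOn hg.continuousOn
  exact .of_bound hg.aestronglyMeasurable C (hμ.mono hC)

lemma dist_integral_le_of_ae_abs_sub_le {α : Type*} [MeasurableSpace α] {ρ : Measure α}
    [IsFiniteMeasure ρ] {f g : α → ℝ} {ε : ℝ}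
    (hf : Integrable f ρ) (hg : Integrable g ρ) (hfg : ∀ᵐ x ∂ρ, |f x - g x| ≤ ε) :
    dist (∫ x, f x ∂ρ) (∫ x, g x ∂ρ) ≤ ε * ρ.real univ := by
  rw [dist_eq_norm, ← integral_sub hf hg]
  exact norm_integral_le_of_norm_le_const hfg

lemma integral_eval_eq_of_integral_pow_eq [IsFiniteMeasure μ] [IsFiniteMeasure ν]
    (hμ : ∀ᵐ x ∂μ, x ∈ Icc a b) (hν : ∀ᵐ x ∂ν, x ∈ Icc a b)
    (hmom : ∀ n : ℕ, ∫ x, x ^ n ∂μ = ∫ x, x ^ n ∂ν) (p : ℝ[X]) :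
    ∫ x, p.eval x ∂μ = ∫ x, p.eval x ∂ν := by
  simp_rw [eval_eq_sum_range]
  rw [integral_finsetSum _ fun i _ =>
      (integrable_of_continuous_of_ae_mem_Icc hμ (continuous_pow i)).const_mul _,
    integral_finsetSum _ fun i _ =>
      (integrable_of_continuous_of_ae_mem_Icc hν (continuous_pow i)).const_mul _]
  simp_rw [integral_const_mul, hmom]

lemma integral_eq_of_integral_pow_eq [IsFiniteMeasure μ] [IsFiniteMeasure ν]
    (hμ : ∀ᵐ x ∂μ, x ∈ Icc a b) (hν : ∀ᵐ x ∂ν, x ∈ Icc a b)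
    (hmom : ∀ n : ℕ, ∫ x, x ^ n ∂μ = ∫ x, x ^ n ∂ν) {g : ℝ → ℝ} (hg : Continuous g) :
    ∫ x, g x ∂μ = ∫ x, g x ∂ν := by
  refine eq_of_forall_dist_le fun ε hε => ?_
  set C := μ.real univ + ν.real univ + 1
  have hC : 0 < C := by positivity
  obtain ⟨p, hp⟩ := exists_polynomial_near_of_continuousOn a b g hg.continuousOn (ε / C)
    (div_pos hε hC)
  have hpg (ρ : Measure ℝ) [IsFiniteMeasure ρ] (hρ : ∀ᵐ x ∂ρ, x ∈ Icc a b) :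
      dist (∫ x, g x ∂ρ) (∫ x, p.eval x ∂ρ) ≤ ε / C * ρ.real univ :=
    dist_integral_le_of_ae_abs_sub_le (integrable_of_continuous_of_ae_mem_Icc hρ hg)
      (integrable_of_continuous_of_ae_mem_Icc hρ p.continuous)
      (hρ.mono fun x hx => by rw [abs_sub_comm]; exact (hp x hx).le)
  calc dist (∫ x, g x ∂μ) (∫ x, g x ∂ν)
      ≤ dist (∫ x, g x ∂μ) (∫ x, p.eval x ∂μ) + dist (∫ x, g x ∂ν) (∫ x, p.eval x ∂ν) := by
        rw [integral_eval_eq_of_integral_pow_eq hμ hν hmom p, dist_comm (∫ x, g x ∂ν)]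
        exact dist_triangle _ _ _
    _ ≤ ε / C * μ.real univ + ε / C * ν.real univ := add_le_add (hpg μ hμ) (hpg ν hν)
    _ ≤ ε / C * C := by rw [← mul_add]; gcongr; linarith
    _ = ε := div_mul_cancel₀ ε hC.ne'

lemma Measure.ext_of_integral_pow_eq [IsFiniteMeasure μ] [IsFiniteMeasure ν]
    (hμ : ∀ᵐ x ∂μ, x ∈ Icc a b) (hν : ∀ᵐ x ∂ν, x ∈ Icc a b)
    (hmom : ∀ n : ℕ, ∫ x, x ^ n ∂μ = ∫ x, x ^ n ∂ν) : μ = ν :=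
  ext_of_forall_integral_eq_of_IsFiniteMeasure fun f =>
    integral_eq_of_integral_pow_eq hμ hν hmom f.continuous

lemma Measure.eq_of_withDensity_eq {α : Type*} [MeasurableSpace α] {μ ν : Measure α}
    {f : α → ENNReal} (hf : Measurable f) (hμ : ∀ᵐ x ∂μ, f x ≠ 0) (hν : ∀ᵐ x ∂ν, f x ≠ 0)
    (hf_top : ∀ x, f x ≠ ⊤) (h : μ.withDensity f = ν.withDensity f) : μ = ν := by
  rw [← withDensity_inv_same hf hμ (.of_forall hf_top),
    ← withDensity_inv_same hf hν (.of_forall hf_top), h]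

end MeasureTheory

noncomputable section

namespace ExpKernel

def expKernel (t κ : ℝ) : ℝ := κ⁻¹ * Real.exp (-(t / κ))

def expNegInv (κ : ℝ) : ℝ := Real.exp (-κ⁻¹)

def momentMeasure (η : Measure ℝ) : Measure ℝ :=
  (η.withDensity fun κ => ENNReal.ofReal (expKernel 1 κ)).map expNegInv

lemma measurable_expKernel (t : ℝ) : Measurable (expKernel t) := by
  unfold expKernel; fun_prop

lemma measurableEmbedding_expNegInv : MeasurableEmbedding expNegInv :=
  (Real.measurable_exp.comp measurable_inv.neg).measurableEmbedding
    (Real.exp_injective.comp (neg_injective.comp inv_injective))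

lemma expKernel_pos {t κ : ℝ} (hκ : 0 < κ) : 0 < expKernel t κ :=
  mul_pos (inv_pos.mpr hκ) (Real.exp_pos _)

lemma expKernel_nonpos {t κ : ℝ} (hκ : κ ≤ 0) : expKernel t κ ≤ 0 :=
  mul_nonpos_of_nonpos_of_nonneg (inv_nonpos.mpr hκ) (Real.exp_pos _).le

lemma expNegInv_pow_mul_expKernel (n : ℕ) (t κ : ℝ) :
    expNegInv κ ^ n * expKernel t κ = expKernel (t + n) κ := by
  simp only [expNegInv, expKernel, ← Real.exp_nat_mul]
  rw [mul_left_comm, ← Real.exp_add]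
  ring_nf

lemma expKernel_one_le (κ : ℝ) : expKernel 1 κ ≤ 6 * min 1 (κ ^ 2) := by
  rcases le_or_gt κ 0 with hκ | hκ
  · exact (expKernel_nonpos hκ).trans (by positivity)
  rcases le_or_gt 1 κ with h1 | h1
  · rw [min_eq_left (one_le_pow₀ h1)]
    calc expKernel 1 κ ≤ 1 * 1 := by
          unfold expKernel
          gcongr
          · exact inv_le_one_of_one_le₀ h1
          · exact Real.exp_le_one_iff.mpr (by rw [neg_nonpos]; positivity)
      _ ≤ 6 * 1 := by norm_num
  · rw [min_eq_right (pow_le_one₀ hκ.le h1.le)]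
    have hexp := Real.pow_div_factorial_le_exp _ (inv_pos.mpr hκ).le 3
    rw [expKernel, one_div, Real.exp_neg, ← div_eq_mul_inv, div_le_iff₀ (Real.exp_pos _)]
    rw [div_le_iff₀ (by positivity)] at hexp
    calc κ⁻¹ = κ⁻¹ ^ 3 * κ ^ 2 := by field_simp
      _ ≤ Real.exp κ⁻¹ * Nat.factorial 3 * κ ^ 2 := by gcongr
      _ = 6 * κ ^ 2 * Real.exp κ⁻¹ := by norm_num [Nat.factorial]; ring

lemma isFiniteMeasure_momentMeasure {η : Measure ℝ}
    (hη : ∫⁻ κ, ENNReal.ofReal (min 1 (κ ^ 2)) ∂η < ⊤) : IsFiniteMeasure (momentMeasure η) := by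
  suffices IsFiniteMeasure (η.withDensity fun κ => ENNReal.ofReal (expKernel 1 κ)) from
    Measure.isFiniteMeasure_map _ _
  refine ⟨?_⟩
  rw [withDensity_apply _ MeasurableSet.univ, setLIntegral_univ]
  calc ∫⁻ κ, ENNReal.ofReal (expKernel 1 κ) ∂η
      ≤ ∫⁻ κ, ENNReal.ofReal 6 * ENNReal.ofReal (min 1 (κ ^ 2)) ∂η := by
        refine lintegral_mono fun κ => ?_
        rw [← ENNReal.ofReal_mul (by norm_num)]
        exact ENNReal.ofReal_le_ofReal (expKernel_one_le κ)
    _ = ENNReal.ofReal 6 * ∫⁻ κ, ENNReal.ofReal (min 1 (κ ^ 2)) ∂η :=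
        lintegral_const_mul _ (by fun_prop)
    _ < ⊤ := ENNReal.mul_lt_top ENNReal.ofReal_lt_top hη

lemma ae_mem_Icc_momentMeasure (η : Measure ℝ) : ∀ᵐ x ∂momentMeasure η, x ∈ Icc (0 : ℝ) 1 := by
  rw [momentMeasure, measurableEmbedding_expNegInv.ae_map_iff,
    ae_withDensity_iff (measurable_expKernel 1).ennreal_ofReal]
  refine .of_forall fun κ hκ => ⟨(Real.exp_pos _).le, Real.exp_le_one_iff.mpr ?_⟩
  have hκ : 0 < κ := by
    by_contra! h
    exact hκ (ENNReal.ofReal_eq_zero.mpr (expKernel_nonpos h))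
  exact neg_nonpos.mpr (inv_pos.mpr hκ).le

lemma lintegral_pow_momentMeasure (η : Measure ℝ) (n : ℕ) :
    ∫⁻ x, ENNReal.ofReal (x ^ n) ∂momentMeasure η =
      ∫⁻ κ, ENNReal.ofReal (expKernel (1 + n) κ) ∂η := by
  rw [momentMeasure, measurableEmbedding_expNegInv.lintegral_map,
    lintegral_withDensity_eq_lintegral_mul _ (measurable_expKernel 1).ennreal_ofReal
      (by unfold expNegInv; fun_prop)]
  refine lintegral_congr fun κ => ?_
  have hpow : 0 ≤ expNegInv κ ^ n := pow_nonneg (Real.exp_pos _).le n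
  rw [Pi.mul_apply, mul_comm, ← ENNReal.ofReal_mul hpow,
    expNegInv_pow_mul_expKernel]

lemma integral_pow_momentMeasure (η : Measure ℝ) (n : ℕ) :
    ∫ x, x ^ n ∂momentMeasure η = (∫⁻ κ, ENNReal.ofReal (expKernel (1 + n) κ) ∂η).toReal := by
  rw [← lintegral_pow_momentMeasure, integral_eq_lintegral_of_nonneg_ae
    ((ae_mem_Icc_momentMeasure η).mono fun x hx => pow_nonneg hx.1 n)
    (continuous_pow n).aestronglyMeasurable]

lemma lintegral_expKernel_eq_of_forall_mem_Ioo {η η' : Measure ℝ}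
    (heq : ∀ y ∈ Ioo (0 : ℝ) 1,
      (∫⁻ κ, ENNReal.ofReal (κ⁻¹ * (y / (1 - y)) ^ 2 * Real.exp (-(y / (κ * (1 - y))))) ∂η) =
      ∫⁻ κ, ENNReal.ofReal (κ⁻¹ * (y / (1 - y)) ^ 2 * Real.exp (-(y / (κ * (1 - y))))) ∂η')
    {t : ℝ} (ht : 0 < t) :
    ∫⁻ κ, ENNReal.ofReal (expKernel t κ) ∂η = ∫⁻ κ, ENNReal.ofReal (expKernel t κ) ∂η' := by
  have ht1 : 0 < 1 + t := by linarith
  have hy : t / (1 + t) ∈ Ioo (0 : ℝ) 1 := ⟨by positivity, (div_lt_one ht1).mpr (by linarith)⟩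
  have hyt : t / (1 + t) / (1 - t / (1 + t)) = t := by field_simp; ring
  have hkernel (κ : ℝ) : ENNReal.ofReal (κ⁻¹ * (t / (1 + t) / (1 - t / (1 + t))) ^ 2 *
      Real.exp (-(t / (1 + t) / (κ * (1 - t / (1 + t)))))) =
      ENNReal.ofReal (t ^ 2) * ENNReal.ofReal (expKernel t κ) := by
    rw [← ENNReal.ofReal_mul (sq_nonneg t), div_mul_eq_div_div_swap, hyt, expKernel]
    ring_nf
  have h := heq _ hy
  simp_rw [hkernel] at h
  rwa [lintegral_const_mul _ (measurable_expKernel t).ennreal_ofReal,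
    lintegral_const_mul _ (measurable_expKernel t).ennreal_ofReal,
    ENNReal.mul_right_inj (by positivity) ENNReal.ofReal_ne_top] at h

lemma ae_ofReal_expKernel_ne_zero {η : Measure ℝ} (hη : η (Ioi 0)ᶜ = 0) (t : ℝ) :
    ∀ᵐ κ ∂η, ENNReal.ofReal (expKernel t κ) ≠ 0 :=
  Eventually.mono (mem_ae_iff.mpr hη) fun _ hκ => (ENNReal.ofReal_pos.mpr (expKernel_pos hκ)).ne'

end ExpKernel

end

open ExpKernel

/-- If `η` and `η̂` are measures on `(0,∞)` with
`∫₀^∞ (1 ∧ κ²) η(dκ) < ∞` and `∫₀^∞ (1 ∧ κ²) η̂(dκ) < ∞`, and for every `y ∈ (0,1)`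
`∫₀^∞ (1/κ)(y/(1−y))² exp(−y/(κ(1−y))) η(dκ) = ∫₀^∞ (1/κ)(y/(1−y))² exp(−y/(κ(1−y))) η̂(dκ)`,
then `η = η̂`. -/
theorem stmt_17 (η η' : Measure ℝ)
    (hη : η (Set.Ioi (0 : ℝ))ᶜ = 0) (hη' : η' (Set.Ioi (0 : ℝ))ᶜ = 0)
    (hint : (∫⁻ κ, ENNReal.ofReal (min 1 (κ ^ 2)) ∂η) < ⊤)
    (hint' : (∫⁻ κ, ENNReal.ofReal (min 1 (κ ^ 2)) ∂η') < ⊤)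
    (heq : ∀ y ∈ Set.Ioo (0 : ℝ) 1,
      (∫⁻ κ, ENNReal.ofReal (κ⁻¹ * (y / (1 - y)) ^ 2 *
        Real.exp (-(y / (κ * (1 - y))))) ∂η) =
      ∫⁻ κ, ENNReal.ofReal (κ⁻¹ * (y / (1 - y)) ^ 2 *
        Real.exp (-(y / (κ * (1 - y))))) ∂η') :
    η = η' := by
  have := isFiniteMeasure_momentMeasure hint
  have := isFiniteMeasure_momentMeasure hint'
  have hmoments (n : ℕ) : ∫ x, x ^ n ∂momentMeasure η = ∫ x, x ^ n ∂momentMeasure η' := by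
    rw [integral_pow_momentMeasure, integral_pow_momentMeasure,
      lintegral_expKernel_eq_of_forall_mem_Ioo heq (by positivity)]
  have hmoment : momentMeasure η = momentMeasure η' :=
    Measure.ext_of_integral_pow_eq (ae_mem_Icc_momentMeasure η) (ae_mem_Icc_momentMeasure η')
      hmoments
  exact Measure.eq_of_withDensity_eq (measurable_expKernel 1).ennreal_ofReal
    (ae_ofReal_expKernel_ne_zero hη 1) (ae_ofReal_expKernel_ne_zero hη' 1)
    (fun _ => ENNReal.ofReal_ne_top) (measurableEmbedding_expNegInv.map_injective hmoment)
end

section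
/- Let W be an exponential random variable with rate 1 and let κ > 0. Then: (1) for every x ∈ [0,1), P( κW/(κW+1) > x ) = exp( − x/(κ(1−x)) ); (2) E[ (κW/(κW+1))² ] ≤ 2κ²; and (3) there exist universal constants C₃ > 0 and C₄ > 0 such that C₃ (1 ∧ κ²) ≤ E[ (κW/(κW+1))² ] ≤ C₄ (1 ∧ κ²) for all κ > 0. -/
/-!
Write `Y = κW/(κW+1)`. The tail formula is the equivalence `x < Y ↔ x/(κ(1-x)) < W`.
For the upper bounds, `Y < 1` and `Y ≤ κW`, while the layer-cake formula gives
`E[W²] = Γ(3) = 2`. For the lower bound, Markov's inequality applied to `Y²` at level `x²`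
gives `E[Y²] ≥ x² P(Y > x)`, and at `x = min(1,κ)/2` the tail is at least `e⁻¹`.
-/

open MeasureTheory Set

lemma lt_mul_div_mul_add_one_iff {κ w x : ℝ} (hκ : 0 < κ) (hw : 0 ≤ w) (hx : x < 1) :
    x < κ * w / (κ * w + 1) ↔ x / (κ * (1 - x)) < w := by
  have hκw : 0 ≤ κ * w := mul_nonneg hκ.le hw
  rw [lt_div_iff₀ (by linarith), div_lt_iff₀ (mul_pos hκ (by linarith))]
  constructor <;> intro h <;> nlinarith

lemma mul_div_mul_add_one_mem_Ico {κ w : ℝ} (hκ : 0 ≤ κ) (hw : 0 ≤ w) :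
    κ * w / (κ * w + 1) ∈ Ico 0 1 := by
  have hκw : 0 ≤ κ * w := mul_nonneg hκ hw
  exact ⟨by positivity, (div_lt_one (by linarith)).2 (by linarith)⟩

lemma mul_div_mul_add_one_le {κ w : ℝ} (hκ : 0 ≤ κ) (hw : 0 ≤ w) :
    κ * w / (κ * w + 1) ≤ κ * w :=
  div_le_self (mul_nonneg hκ hw) (le_add_of_nonneg_left (mul_nonneg hκ hw))

lemma sq_mul_measureReal_lt_le_integral_sq {Ω : Type*} [MeasurableSpace Ω] {μ : Measure Ω}
    [IsFiniteMeasure μ] {Y : Ω → ℝ} (hY : Integrable (fun ω => Y ω ^ 2) μ) {x : ℝ}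
    (hx : 0 ≤ x) :
    x ^ 2 * μ.real {ω | x < Y ω} ≤ ∫ ω, Y ω ^ 2 ∂μ := by
  have hsub : {ω | x < Y ω} ⊆ {ω | x ^ 2 ≤ Y ω ^ 2} := fun ω (h : x < Y ω) =>
    show x ^ 2 ≤ Y ω ^ 2 from pow_le_pow_left₀ hx h.le 2
  calc x ^ 2 * μ.real {ω | x < Y ω} ≤ x ^ 2 * μ.real {ω | x ^ 2 ≤ Y ω ^ 2} :=
        mul_le_mul_of_nonneg_left (measureReal_mono hsub) (sq_nonneg x)
    _ ≤ ∫ ω, Y ω ^ 2 ∂μ :=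
        mul_meas_ge_le_integral_of_nonneg (ae_of_all _ fun ω => sq_nonneg _) hY _

section ExponentialTail

variable {Ω : Type*} [MeasurableSpace Ω] {μ : Measure Ω} {W : Ω → ℝ}

lemma lintegral_rpow_eq_Gamma (hWmeas : Measurable W) (hWnn : ∀ ω, 0 ≤ W ω)
    (hWdist : ∀ x : ℝ, 0 ≤ x → μ {ω | x < W ω} = ENNReal.ofReal (Real.exp (-x)))
    {p : ℝ} (hp : 0 < p) :
    ∫⁻ ω, ENNReal.ofReal (W ω ^ p) ∂μ = ENNReal.ofReal (Real.Gamma (p + 1)) := by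
  rw [lintegral_rpow_eq_lintegral_meas_lt_mul μ (ae_of_all _ hWnn) hWmeas.aemeasurable hp,
    setLIntegral_congr_fun measurableSet_Ioi (fun t ht => by
      rw [hWdist t (le_of_lt ht), ← ENNReal.ofReal_mul (Real.exp_nonneg _)]),
    ← ofReal_integral_eq_lintegral_ofReal (Real.GammaIntegral_convergent hp)
      (ae_restrict_of_forall_mem measurableSet_Ioi fun t ht =>
        mul_nonneg (Real.exp_nonneg _) (Real.rpow_nonneg (le_of_lt ht) _)),
    ← Real.Gamma_eq_integral hp, ← ENNReal.ofReal_mul hp.le, Real.Gamma_add_one hp.ne']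

lemma lintegral_sq_eq_two (hWmeas : Measurable W) (hWnn : ∀ ω, 0 ≤ W ω)
    (hWdist : ∀ x : ℝ, 0 ≤ x → μ {ω | x < W ω} = ENNReal.ofReal (Real.exp (-x))) :
    ∫⁻ ω, ENNReal.ofReal (W ω ^ 2) ∂μ = 2 := by
  have h := lintegral_rpow_eq_Gamma hWmeas hWnn hWdist two_pos
  norm_num [Real.rpow_two] at h
  exact h

lemma measure_lt_mul_div_mul_add_one (hWnn : ∀ ω, 0 ≤ W ω)
    (hWdist : ∀ x : ℝ, 0 ≤ x → μ {ω | x < W ω} = ENNReal.ofReal (Real.exp (-x)))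
    {κ x : ℝ} (hκ : 0 < κ) (hx : x ∈ Ico 0 1) :
    μ {ω | x < κ * W ω / (κ * W ω + 1)} =
      ENNReal.ofReal (Real.exp (-(x / (κ * (1 - x))))) := by
  have hset : {ω | x < κ * W ω / (κ * W ω + 1)} = {ω | x / (κ * (1 - x)) < W ω} := by
    ext ω
    exact lt_mul_div_mul_add_one_iff hκ (hWnn ω) hx.2
  rw [hset, hWdist _ (div_nonneg hx.1 (mul_nonneg hκ.le (by linarith [hx.2])))]

lemma integral_sq_mul_div_mul_add_one_le (hWmeas : Measurable W) (hWnn : ∀ ω, 0 ≤ W ω)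
    (hWdist : ∀ x : ℝ, 0 ≤ x → μ {ω | x < W ω} = ENNReal.ofReal (Real.exp (-x)))
    {κ : ℝ} (hκ : 0 ≤ κ) :
    ∫ ω, (κ * W ω / (κ * W ω + 1)) ^ 2 ∂μ ≤ 2 * κ ^ 2 := by
  rw [integral_eq_lintegral_of_nonneg_ae (ae_of_all _ fun ω => sq_nonneg _)
    (Measurable.aestronglyMeasurable (by fun_prop))]
  refine ENNReal.toReal_le_of_le_ofReal (by positivity) ?_
  calc ∫⁻ ω, ENNReal.ofReal ((κ * W ω / (κ * W ω + 1)) ^ 2) ∂μ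
      ≤ ∫⁻ ω, ENNReal.ofReal (κ ^ 2) * ENNReal.ofReal (W ω ^ 2) ∂μ := by
        refine lintegral_mono fun ω => ?_
        rw [← ENNReal.ofReal_mul (sq_nonneg κ), ← mul_pow]
        exact ENNReal.ofReal_le_ofReal (pow_le_pow_left₀
          (mul_div_mul_add_one_mem_Ico hκ (hWnn ω)).1 (mul_div_mul_add_one_le hκ (hWnn ω)) 2)
    _ = ENNReal.ofReal (2 * κ ^ 2) := by
        rw [lintegral_const_mul _ (by fun_prop), lintegral_sq_eq_two hWmeas hWnn hWdist,
          mul_comm, ENNReal.ofReal_mul zero_le_two, ENNReal.ofReal_ofNat]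

variable [IsProbabilityMeasure μ]

lemma integrable_sq_mul_div_mul_add_one (hWmeas : Measurable W) (hWnn : ∀ ω, 0 ≤ W ω)
    {κ : ℝ} (hκ : 0 ≤ κ) :
    Integrable (fun ω => (κ * W ω / (κ * W ω + 1)) ^ 2) μ := by
  refine .of_bound (Measurable.aestronglyMeasurable (by fun_prop)) 1 (ae_of_all _ fun ω => ?_)
  obtain ⟨h0, h1⟩ := mul_div_mul_add_one_mem_Ico hκ (hWnn ω)
  rw [Real.norm_eq_abs, abs_of_nonneg (sq_nonneg _)]
  nlinarith

lemma integral_sq_mul_div_mul_add_one_le_one (hWmeas : Measurable W) (hWnn : ∀ ω, 0 ≤ W ω)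
    {κ : ℝ} (hκ : 0 ≤ κ) :
    ∫ ω, (κ * W ω / (κ * W ω + 1)) ^ 2 ∂μ ≤ 1 :=
  (integral_mono (integrable_sq_mul_div_mul_add_one hWmeas hWnn hκ) (integrable_const 1)
    fun ω => sq_le_one_iff₀ ((mul_div_mul_add_one_mem_Ico hκ (hWnn ω)).1) |>.2
      (mul_div_mul_add_one_mem_Ico hκ (hWnn ω)).2.le).trans_eq (by simp)

lemma mul_min_le_integral_sq_mul_div_mul_add_one (hWmeas : Measurable W) (hWnn : ∀ ω, 0 ≤ W ω)
    (hWdist : ∀ x : ℝ, 0 ≤ x → μ {ω | x < W ω} = ENNReal.ofReal (Real.exp (-x)))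
    {κ : ℝ} (hκ : 0 < κ) :
    Real.exp (-1) / 4 * min 1 (κ ^ 2) ≤ ∫ ω, (κ * W ω / (κ * W ω + 1)) ^ 2 ∂μ := by
  set x := min 1 κ / 2 with hx_def
  have hx : x ∈ Ico 0 1 := ⟨by positivity, by linarith [min_le_left 1 κ, hx_def]⟩
  have hx_sq : x ^ 2 = min 1 (κ ^ 2) / 4 := by
    rcases le_total 1 κ with h | h
    · rw [hx_def, min_eq_left h, min_eq_left (by nlinarith)]; norm_num
    · rw [hx_def, min_eq_right h, min_eq_right (by nlinarith)]; ring
  have htail : Real.exp (-1) ≤ μ.real {ω | x < κ * W ω / (κ * W ω + 1)} := by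
    rw [measureReal_def, measure_lt_mul_div_mul_add_one hWnn hWdist hκ hx,
      ENNReal.toReal_ofReal (Real.exp_nonneg _), Real.exp_le_exp, neg_le_neg_iff,
      div_le_one (mul_pos hκ (by linarith [hx.2]))]
    nlinarith [min_le_left 1 κ, min_le_right 1 κ, hx_def]
  calc Real.exp (-1) / 4 * min 1 (κ ^ 2) = x ^ 2 * Real.exp (-1) := by rw [hx_sq]; ring
    _ ≤ x ^ 2 * μ.real {ω | x < κ * W ω / (κ * W ω + 1)} := by gcongr
    _ ≤ ∫ ω, (κ * W ω / (κ * W ω + 1)) ^ 2 ∂μ :=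
        sq_mul_measureReal_lt_le_integral_sq (integrable_sq_mul_div_mul_add_one hWmeas hWnn hκ.le)
          hx.1

end ExponentialTail

/-- Let `W` be an exponential random variable with rate `1`.  Then for every
`κ > 0`: (1) for every `x ∈ [0,1)`, `P(κW/(κW+1) > x) = exp(−x/(κ(1−x)))`;
(2) `E[(κW/(κW+1))²] ≤ 2κ²`; and (3) there are universal constants `C₃, C₄ > 0` with
`C₃ (1 ∧ κ²) ≤ E[(κW/(κW+1))²] ≤ C₄ (1 ∧ κ²)` for all `κ > 0`. -/
theorem stmt_18
    {Ω : Type*} [MeasurableSpace Ω] (μ : Measure Ω) [IsProbabilityMeasure μ]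
    (W : Ω → ℝ) (hWmeas : Measurable W) (hWnn : ∀ ω, 0 ≤ W ω)
    (hWdist : ∀ x : ℝ, 0 ≤ x → μ {ω | x < W ω} = ENNReal.ofReal (Real.exp (-x))) :
    (∀ κ : ℝ, 0 < κ → ∀ x ∈ Set.Ico (0 : ℝ) 1,
      μ {ω | x < κ * W ω / (κ * W ω + 1)} =
        ENNReal.ofReal (Real.exp (-(x / (κ * (1 - x)))))) ∧
    (∀ κ : ℝ, 0 < κ →
      (∫ ω, (κ * W ω / (κ * W ω + 1)) ^ 2 ∂μ) ≤ 2 * κ ^ 2) ∧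
    (∃ C₃ C₄ : ℝ, 0 < C₃ ∧ 0 < C₄ ∧ ∀ κ : ℝ, 0 < κ →
      C₃ * min 1 (κ ^ 2) ≤ (∫ ω, (κ * W ω / (κ * W ω + 1)) ^ 2 ∂μ) ∧
      (∫ ω, (κ * W ω / (κ * W ω + 1)) ^ 2 ∂μ) ≤ C₄ * min 1 (κ ^ 2)) := by
  have h_le_two_mul_sq κ (hκ : 0 < κ) :=
    integral_sq_mul_div_mul_add_one_le (μ := μ) hWmeas hWnn hWdist hκ.le
  refine ⟨fun κ hκ x hx => measure_lt_mul_div_mul_add_one hWnn hWdist hκ hx, h_le_two_mul_sq,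
    Real.exp (-1) / 4, 2, by positivity, two_pos, fun κ hκ =>
      ⟨mul_min_le_integral_sq_mul_div_mul_add_one hWmeas hWnn hWdist hκ, ?_⟩⟩
  calc ∫ ω, (κ * W ω / (κ * W ω + 1)) ^ 2 ∂μ ≤ min 1 (2 * κ ^ 2) :=
        le_min (integral_sq_mul_div_mul_add_one_le_one hWmeas hWnn hκ.le) (h_le_two_mul_sq κ hκ)
    _ ≤ 2 * min 1 (κ ^ 2) := by
        rw [mul_min_of_nonneg _ _ zero_le_two]
        exact min_le_min (by norm_num) le_rfl
end
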